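/- Let A ∈ ℝ and let z₁,…,z₅ : ℝ → ℝ be differentiable functions satisfying the system (8): z₁' = 2z₄, z₂' = z₃, z₃' = −z₁ − 16A z₂ − 16 z₂², z₄' = −A z₁ + (1/3) z₅ − (8/3) z₁ z₂, z₅' = −6A z₄ + 2 z₁ z₃ − 8 z₂ z₄. Then F₁ = (1/2)A z₁ + (1/6) z₅ + 8A z₂² + (1/2) z₃² + (2/3) z₁ z₂ + (16/3) z₂³ is a constant of motion: d/dt F₁(z(t)) = 0. -/

import Mathlib

/-! `F₁` (`firstIntegral`) is a polynomial in `z₁, z₂, z₃, z₅`, so along any differentiable curve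
its derivative is its gradient paired with the velocity. Substituting the right-hand side of
system (8) for the velocity, that pairing vanishes identically as a polynomial in `A, z₁, …, z₄`. -/

noncomputable def firstIntegral (A z₁ z₂ z₃ z₅ : ℝ) : ℝ :=
  (1/2) * A * z₁ + (1/6) * z₅ + 8 * A * z₂ ^ 2 + (1/2) * z₃ ^ 2
    + (2/3) * z₁ * z₂ + (16/3) * z₂ ^ 3

theorem hasDerivAt_firstIntegral_comp (A : ℝ) {z₁ z₂ z₃ z₅ : ℝ → ℝ} {v₁ v₂ v₃ v₅ t : ℝ}
    (h₁ : HasDerivAt z₁ v₁ t) (h₂ : HasDerivAt z₂ v₂ t)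
    (h₃ : HasDerivAt z₃ v₃ t) (h₅ : HasDerivAt z₅ v₅ t) :
    HasDerivAt (fun s => firstIntegral A (z₁ s) (z₂ s) (z₃ s) (z₅ s))
      ((1/2) * A * v₁ + (1/6) * v₅ + 16 * A * z₂ t * v₂ + z₃ t * v₃
        + (2/3) * (v₁ * z₂ t + z₁ t * v₂) + 16 * z₂ t ^ 2 * v₂) t := by
  have h := (((((h₁.const_mul ((1/2) * A)).add (h₅.const_mul (1/6))).add
      ((h₂.pow 2).const_mul (8 * A))).add ((h₃.pow 2).const_mul (1/2))).add
      ((h₁.mul h₂).const_mul (2/3))).add ((h₂.pow 3).const_mul (16/3))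
  refine (h.congr_deriv (by ring)).congr_of_eventuallyEq (.of_eq ?_)
  funext s
  simp only [firstIntegral, Pi.add_apply, Pi.mul_apply, Pi.pow_apply]
  ring

theorem firstIntegral_gradient_inner_vectorField (A z₁ z₂ z₃ z₄ : ℝ) :
    (1/2) * A * (2 * z₄) + (1/6) * (-(6 * A) * z₄ + 2 * z₁ * z₃ - 8 * z₂ * z₄)
      + 16 * A * z₂ * z₃ + z₃ * (-z₁ - 16 * A * z₂ - 16 * z₂ ^ 2)
      + (2/3) * (2 * z₄ * z₂ + z₁ * z₃) + 16 * z₂ ^ 2 * z₃ = 0 := by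
  ring

theorem F1_constant_of_motion (A : ℝ) (z₁ z₂ z₃ z₄ z₅ : ℝ → ℝ)
    (hz₁ : Differentiable ℝ z₁) (hz₂ : Differentiable ℝ z₂)
    (hz₃ : Differentiable ℝ z₃)
    (hz₅ : Differentiable ℝ z₅)
    (h₁ : ∀ t, deriv z₁ t = 2 * z₄ t)
    (h₂ : ∀ t, deriv z₂ t = z₃ t)
    (h₃ : ∀ t, deriv z₃ t = -z₁ t - 16 * A * z₂ t - 16 * (z₂ t)^2)
    (h₅ : ∀ t, deriv z₅ t = -(6 * A) * z₄ t + 2 * z₁ t * z₃ t - 8 * z₂ t * z₄ t) :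
    ∀ t, deriv (fun s =>
      (1/2) * A * z₁ s + (1/6) * z₅ s + 8 * A * (z₂ s)^2 + (1/2) * (z₃ s)^2
        + (2/3) * z₁ s * z₂ s + (16/3) * (z₂ s)^3) t = 0 := by
  intro t
  have hF := hasDerivAt_firstIntegral_comp A
    (h₁ t ▸ (hz₁ t).hasDerivAt) (h₂ t ▸ (hz₂ t).hasDerivAt)
    (h₃ t ▸ (hz₃ t).hasDerivAt) (h₅ t ▸ (hz₅ t).hasDerivAt)
  exact hF.deriv.trans (firstIntegral_gradient_inner_vectorField A (z₁ t) (z₂ t) (z₃ t) (z₄ t))
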